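/- arXiv:1901.04070 — 2 statements merged into one kernel-verified Lean document; each statement's English description precedes it below -/
import Mathlib

section
/- Let V be a finite-dimensional real vector space of dimension n ≥ 3 equipped with a nondegenerate symmetric bilinear form g. Suppose vectors (covectors) α, β, γ, δ and a covector v with g-squared-norm v² = g⁻¹(v,v) ≠ 0 satisfy α_j g_{kl} + β_k g_{lj} + γ_l g_{jk} + δ_j v_k v_l = 0 for all indices (i.e., as a trilinear tensor identity). Then α = β = γ = δ = 0. -/
/-!
Let `u` be the vector dual to `v` under `g` (so `g(u, ·) = v` and `v(u) = v²`), and let `w ≠ 0`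
lie in the kernel of `v`, which exists once `dim V ≥ 2`. Evaluating the relation with `u` in the
middle slot and then `w` in the first one shows `β(u) = 0`; since the relation is symmetric under
`β ↔ γ`, also `γ(u) = 0`. Putting `u` in the last slot as well gives `α = -v² δ`, after
which the relation with `u` in the middle slot collapses to `γ(Z) v(X) = 0`, so `γ = 0` and
likewise `β = 0`. What remains is `δ(X) (v(Y) v(Z) - v² g(Y, Z)) = 0`; if `δ ≠ 0`, `g` would
be proportional to `v ⊗ v`, which kills `w`, contradicting nondegeneracy.
-/

open Matrix Finset Module

theorem Module.Dual.exists_ne_zero_apply_eq_zero {K V : Type*} [Field K] [AddCommGroup V]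
    [Module K V] [FiniteDimensional K V] (hdim : 1 < finrank K V) (f : Dual K V) :
    ∃ w ≠ 0, f w = 0 := by
  obtain ⟨w, hw, hw0⟩ :=
    (Submodule.ne_bot_iff _).mp (f.ker_ne_bot_of_finrank_lt (by rwa [finrank_self]))
  exact ⟨w, hw0, hw⟩

section CommRing

variable {K V : Type*} [CommRing K] [AddCommGroup V] [Module K V]

def TensorRelation (B : LinearMap.BilinForm K V) (v α β γ δ : Dual K V) : Prop :=
  ∀ X Y Z, α X * B Y Z + β Y * B Z X + γ Z * B X Y + δ X * (v Y * v Z) = 0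

namespace TensorRelation

variable {B : LinearMap.BilinForm K V} {v α β γ δ : Dual K V}

theorem swap (hB : B.IsSymm) (h : TensorRelation B v α β γ δ) :
    TensorRelation B v α γ β δ := by
  intro X Y Z
  have := h X Z Y
  rw [hB.eq Z Y, hB.eq Y X, hB.eq X Z] at this
  linear_combination this

theorem contract_middle (hB : B.IsSymm) {u : V} (hu : B u = v)
    (h : TensorRelation B v α β γ δ) (X Z : V) :
    α X * v Z + β u * B Z X + γ Z * v X + v u * δ X * v Z = 0 := by
  have := h X u Z
  rw [hB.eq X u, hu] at this
  linear_combination this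

end TensorRelation

end CommRing

namespace TensorRelation

variable {K V : Type*} [Field K] [AddCommGroup V] [Module K V]
variable {B : LinearMap.BilinForm K V} {v α β γ δ : Dual K V} {u w : V}

theorem middle_apply_eq_zero (hB : B.IsSymm) (hnd : B.Nondegenerate) (hu : B u = v)
    (hvu : v u ≠ 0) (hw : v w = 0) (hw0 : w ≠ 0) (h : TensorRelation B v α β γ δ) :
    β u = 0 := by
  have hXw := h.contract_middle hB hu w
  have hc : α w + v u * δ w = 0 := by
    have := hXw u
    rw [hu, hw] at this
    exact (mul_eq_zero.mp (by linear_combination this)).resolve_right hvu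
  by_contra hβ
  refine hw0 (hnd.2 w fun Z => ?_)
  have := hXw Z
  rw [hw] at this
  exact (mul_eq_zero.mp (by linear_combination this - v Z * hc)).resolve_left hβ

theorem first_eq_neg_smul (hB : B.IsSymm) (hu : B u = v) (hvu : v u ≠ 0) (hβ : β u = 0)
    (hγ : γ u = 0) (h : TensorRelation B v α β γ δ) : α = -v u • δ := by
  ext X
  have := h.contract_middle hB hu X u
  rw [hu, hβ, hγ] at this
  have : (α X + v u * δ X) * v u = 0 := by linear_combination this
  simp only [LinearMap.smul_apply, smul_eq_mul]
  linear_combination (mul_eq_zero.mp this).resolve_right hvu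

theorem last_eq_zero (hB : B.IsSymm) (hu : B u = v) (hvu : v u ≠ 0) (hα : α = -v u • δ)
    (hβ : β u = 0) (h : TensorRelation B v α β γ δ) : γ = 0 := by
  ext Z
  have := h.contract_middle hB hu u Z
  rw [hα, hβ] at this
  simp only [LinearMap.smul_apply, smul_eq_mul] at this
  exact (mul_eq_zero.mp (by linear_combination this)).resolve_right hvu

theorem quadratic_eq_zero (hnd : B.Nondegenerate) (hvu : v u ≠ 0) (hw : v w = 0) (hw0 : w ≠ 0)
    (h : TensorRelation B v (-v u • δ) 0 0 δ) : δ = 0 := by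
  ext X
  by_contra hδ
  refine hw0 (hnd.1 w fun Z => ?_)
  have := h X w Z
  simp only [LinearMap.smul_apply, smul_eq_mul, LinearMap.zero_apply, hw] at this
  have : (v u * δ X) * B w Z = 0 := by linear_combination -this
  exact (mul_eq_zero.mp this).resolve_left (mul_ne_zero hvu hδ)

theorem eq_zero [FiniteDimensional K V] (hdim : 1 < finrank K V) (hB : B.IsSymm)
    (hnd : B.Nondegenerate) (hu : B u = v) (hvu : v u ≠ 0) (h : TensorRelation B v α β γ δ) :
    α = 0 ∧ β = 0 ∧ γ = 0 ∧ δ = 0 := by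
  obtain ⟨w, hw0, hw⟩ := v.exists_ne_zero_apply_eq_zero hdim
  have hβu := h.middle_apply_eq_zero hB hnd hu hvu hw hw0
  have hγu := (h.swap hB).middle_apply_eq_zero hB hnd hu hvu hw hw0
  have hα := h.first_eq_neg_smul hB hu hvu hβu hγu
  have hγ := h.last_eq_zero hB hu hvu hα hβu
  have hβ := (h.swap hB).last_eq_zero hB hu hvu hα hγu
  subst hα hβ hγ
  obtain rfl := h.quadratic_eq_zero hnd hvu hw hw0
  simp

end TensorRelation

section TripleSums

variable {ι R : Type*} [Fintype ι] [CommSemiring R]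

theorem dotProduct_mul_dotProduct_mulVec (a X Y Z : ι → R) (M : Matrix ι ι R) :
    (a ⬝ᵥ X) * (Y ⬝ᵥ M *ᵥ Z) = ∑ j, ∑ k, ∑ l, X j * Y k * Z l * (a j * M k l) := by
  rw [dotProduct, sum_mul]
  refine sum_congr rfl fun j _ => ?_
  rw [dotProduct, mul_sum]
  refine sum_congr rfl fun k _ => ?_
  rw [mulVec, dotProduct, mul_sum, mul_sum]
  exact sum_congr rfl fun l _ => by ring

theorem dotProduct_mul_dotProduct_mul_dotProduct (a b c X Y Z : ι → R) :
    (a ⬝ᵥ X) * ((b ⬝ᵥ Y) * (c ⬝ᵥ Z)) =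
      ∑ j, ∑ k, ∑ l, X j * Y k * Z l * (a j * b k * c l) := by
  rw [dotProduct, sum_mul]
  refine sum_congr rfl fun j _ => ?_
  rw [dotProduct, sum_mul, mul_sum]
  refine sum_congr rfl fun k _ => ?_
  rw [dotProduct, mul_sum, mul_sum]
  exact sum_congr rfl fun l _ => by ring

end TripleSums

theorem tensorRelation_toBilin' {ι R : Type*} [Fintype ι] [DecidableEq ι] [CommRing R]
    {g : Matrix ι ι R} {α β γ δ v : ι → R}
    (h : ∀ j k l, α j * g k l + β k * g l j + γ l * g j k + δ j * v k * v l = 0) :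
    TensorRelation g.toBilin' (dotProductEquiv R ι v) (dotProductEquiv R ι α)
      (dotProductEquiv R ι β) (dotProductEquiv R ι γ) (dotProductEquiv R ι δ) := by
  intro X Y Z
  simp only [dotProductEquiv_apply_apply, toBilin'_apply']
  rw [dotProduct_mul_dotProduct_mulVec, dotProduct_mul_dotProduct_mulVec,
    dotProduct_mul_dotProduct_mulVec, dotProduct_mul_dotProduct_mul_dotProduct,
    sum_comm_cycle (f := fun k l j => Y k * Z l * X j * (β k * g l j)),
    ← sum_comm_cycle (f := fun j k l => Z l * X j * Y k * (γ l * g j k))]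
  simp only [← sum_add_distrib]
  exact sum_eq_zero fun j _ => sum_eq_zero fun k _ => sum_eq_zero fun l _ => by
    linear_combination X j * Y k * Z l * h j k l

/-- On an `n`-dimensional real vector space (`n ≥ 3`) with a nondegenerate
symmetric bilinear form `g` (with inverse `ginv`), if covectors `α β γ δ` and a covector `v`
with `g⁻¹(v,v) ≠ 0` satisfy `α_j g_{kl} + β_k g_{lj} + γ_l g_{jk} + δ_j v_k v_l = 0`,
then `α = β = γ = δ = 0`. -/
theorem stmt0 (n : ℕ) (hn : 3 ≤ n)
    (g ginv : Fin n → Fin n → ℝ)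
    (hgsym : ∀ i j, g i j = g j i)
    (hinv : ∀ i j, ∑ k, g i k * ginv k j = if i = j then (1:ℝ) else 0)
    (α β γ δ v : Fin n → ℝ)
    (hv : (∑ j, ∑ k, ginv j k * v j * v k) ≠ 0)
    (heq : ∀ j k l, α j * g k l + β k * g l j + γ l * g j k + δ j * v k * v l = 0) :
    α = 0 ∧ β = 0 ∧ γ = 0 ∧ δ = 0 := by
  have hGGi : Matrix.of g * Matrix.of ginv = 1 := by
    ext i j
    simpa [Matrix.mul_apply, Matrix.one_apply] using hinv i j
  have hu : (Matrix.of g).toBilin' (v ᵥ* Matrix.of ginv) = dotProductEquiv ℝ (Fin n) v := by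
    refine LinearMap.ext fun Y => ?_
    rw [toBilin'_apply', ← dotProduct_mulVec, mulVec_mulVec, mul_eq_one_comm.mp hGGi,
      one_mulVec, dotProductEquiv_apply_apply]
  have hvu : dotProductEquiv ℝ (Fin n) v (v ᵥ* Matrix.of ginv) ≠ 0 := by
    convert hv using 1
    simp only [dotProductEquiv_apply_apply, dotProduct, vecMul, of_apply, mul_sum]
    rw [sum_comm]
    exact sum_congr rfl fun j _ => sum_congr rfl fun k _ => by ring
  have hdim : 1 < finrank ℝ (Fin n → ℝ) := by rw [finrank_fin_fun]; omega
  have hsymm : (Matrix.of g).toBilin'.IsSymm :=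
    isSymm_toBilin'_iff_isSymm.mpr (funext₂ fun i j => hgsym j i)
  have hnd : (Matrix.of g).toBilin'.Nondegenerate :=
    LinearMap.BilinForm.nondegenerate_toBilin'_of_det_ne_zero' _
      (det_ne_zero_of_right_inverse hGGi)
  obtain ⟨hα, hβ, hγ, hδ⟩ := (tensorRelation_toBilin' heq).eq_zero hdim hsymm hnd hu hvu
  simp only [LinearEquiv.map_eq_zero_iff] at hα hβ hγ hδ
  exact ⟨hα, hβ, hγ, hδ⟩
end

section
/- Let a : I → ℝ be smooth and positive, φ = a'/a, and let n ≥ 3. Suppose smooth functions R(t), ξ(t) satisfy the system R' = ((n+2)/2) ξ' and R' - n ξ' = 2φ (R - n ξ). Then there exist constants α, β such that R(t) = α - β·(n+2)/(n-2)·a(t)² and ξ(t) = α/n - β·(2/(n-2))·a(t)². -/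
/-- if smooth functions `R`, `ξ` satisfy `R' = ((n+2)/2)ξ'` and
`R' - nξ' = 2(a'/a)(R - nξ)` with `a` smooth positive and `n ≥ 3`, then there are
constants `α`, `β` with `R = α - β (n+2)/(n-2) a²` and `ξ = α/n - β (2/(n-2)) a²`. -/
theorem stmt10 (n : ℕ) (hn : 3 ≤ n) (a R ξ : ℝ → ℝ)
    (ha : ContDiff ℝ (⊤ : ℕ∞) a) (hpos : ∀ t, 0 < a t)
    (hR : ContDiff ℝ (⊤ : ℕ∞) R) (hξ : ContDiff ℝ (⊤ : ℕ∞) ξ)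
    (h1 : ∀ t, deriv R t = (((n:ℝ)+2)/2) * deriv ξ t)
    (h2 : ∀ t, deriv R t - n * deriv ξ t
        = 2 * (deriv a t / a t) * (R t - n * ξ t)) :
    ∃ α β : ℝ, (∀ t, R t = α - β * (((n:ℝ)+2)/((n:ℝ)-2)) * a t ^ 2) ∧
      (∀ t, ξ t = α / n - β * (2/((n:ℝ)-2)) * a t ^ 2) := by
  have hn3 : (3:ℝ) ≤ (n:ℝ) := by exact_mod_cast hn
  have hn2 : ((n:ℝ) - 2) ≠ 0 := by nlinarith
  have hnne : ((n:ℝ)) ≠ 0 := by nlinarith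
  have hRd : Differentiable ℝ R := hR.differentiable (by simp)
  have hξd : Differentiable ℝ ξ := hξ.differentiable (by simp)
  have had : Differentiable ℝ a := ha.differentiable (by simp)
  have hane : ∀ t, a t ≠ 0 := fun t => (hpos t).ne'
  set u : ℝ → ℝ := fun t => R t - n * ξ t with hu
  have hud : Differentiable ℝ u := hRd.sub (hξd.const_mul _)
  have hudv : ∀ t, deriv u t = 2 * (deriv a t / a t) * u t := by
    intro t
    have h' : deriv u t = deriv R t - n * deriv ξ t := by
      rw [hu, deriv_fun_sub (hRd t) ((hξd t).const_mul _), deriv_const_mul _ (hξd t)]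
    rw [h', h2 t]
  have ha2d : Differentiable ℝ (fun t => a t ^ 2) := had.pow 2
  have ha2dv : ∀ t, deriv (fun t => a t ^ 2) t = 2 * a t * deriv a t := by
    intro t
    rw [deriv_fun_pow (had t) 2]
    ring
  have hhd : Differentiable ℝ (fun t => u t / a t ^ 2) :=
    hud.div ha2d (fun t => pow_ne_zero 2 (hane t))
  have hhdv : ∀ t, deriv (fun t => u t / a t ^ 2) t = 0 := by
    intro t
    rw [deriv_fun_div (hud t) (ha2d t) (pow_ne_zero 2 (hane t)), hudv t, ha2dv t]
    field_simp [hane t]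
    ring
  have hconst := is_const_of_deriv_eq_zero hhd hhdv
  obtain ⟨β, hu2⟩ : ∃ β : ℝ, ∀ t, u t = β * a t ^ 2 := by
    refine ⟨u 0 / a 0 ^ 2, fun t => ?_⟩
    have ht : u t / a t ^ 2 = u 0 / a 0 ^ 2 := hconst t 0
    exact (div_eq_iff (pow_ne_zero 2 (hane t))).mp ht
  have key : ∀ t, (((n:ℝ))-2) * deriv R t = -(2*β*((n:ℝ)+2)*(a t * deriv a t)) := by
    intro t
    have e1 := h1 t
    have e2 : deriv R t - n * deriv ξ t = 2 * β * (a t * deriv a t) := by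
      have h2' := h2 t
      rw [show R t - (n:ℝ) * ξ t = β * a t ^ 2 from hu2 t] at h2'
      rw [h2']
      field_simp [hane t]
    linear_combination (2*(n:ℝ)) * e1 - ((n:ℝ)+2) * e2
  have hFd : Differentiable ℝ (fun t => ((n:ℝ)-2) * R t + β*((n:ℝ)+2) * a t ^ 2) :=
    (hRd.const_mul _).add (ha2d.const_mul _)
  have hFdv : ∀ t, deriv (fun t => ((n:ℝ)-2) * R t + β*((n:ℝ)+2) * a t ^ 2) t = 0 := by
    intro t
    rw [deriv_fun_add ((hRd t).const_mul _) ((ha2d t).const_mul _),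
      deriv_const_mul _ (hRd t), deriv_const_mul _ (ha2d t), ha2dv t]
    linear_combination key t
  have hFconst := is_const_of_deriv_eq_zero hFd hFdv
  obtain ⟨A, hA⟩ : ∃ A : ℝ, ∀ t, ((n:ℝ)-2) * R t + β*((n:ℝ)+2) * a t ^ 2 = A :=
    ⟨((n:ℝ)-2) * R 0 + β*((n:ℝ)+2) * a 0 ^ 2, fun t => hFconst t 0⟩
  refine ⟨A / ((n:ℝ)-2), β, ?_, ?_⟩
  · intro t
    field_simp
    linear_combination hA t
  · intro t
    have hut : R t - (n:ℝ) * ξ t = β * a t ^ 2 := hu2 t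
    field_simp
    linear_combination hA t - ((n:ℝ)-2) * hut
end
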